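/- arXiv:1909.01928 — 2 statements merged into one kernel-verified Lean document; each statement's English description precedes it below -/
import Mathlib

section
/- Let ξ = [A₁, A₂, ...] ∈ T^{-1}𝔽_q[[T^{-1}]] be irrational with continued fraction partial quotients A_i ∈ 𝔽_q[T] (deg A_i > 0), and suppose there is a non-constant irreducible polynomial R ∈ 𝔽_q[T] dividing A_i for all i ≥ 1. Then there exists α ∈ 𝔽_q((T^{-1})) such that ‖Qξ − α‖ ≥ |R|^{-2}·|Q|^{-1} for every nonzero Q ∈ 𝔽_q[T]. -/
/-!
Write `θₘ = Qₘξ - Pₘ`; by `HasCF` it has order `deg Qₘ₊₁` as a series in `T⁻¹`. Take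
`α = ∑ₘ (Aₘ₊₁ / R) θₘ`. A polynomial `Q` has an Ostrowski expansion `Q = ∑ bₖ Qₖ` with
`deg bₖ < deg Aₖ₊₁`, and then `Qξ - α` is a polynomial plus `∑ (bₖ - Aₖ₊₁ / R) θₖ`. A nonzero term
of this sum has order in `(deg Qₖ, deg Qₖ₊₁]`, so the first one contributes a coefficient of
`T⁻ⁱ`, `i > 0`, that no polynomial can cancel. Since `Aₖ₊₁ / R ≠ 0` has degree
`deg Aₖ₊₁ - deg R`, a nonzero difference already occurs at the top index of `Q` or just above
it, which gives `i ≤ 2 deg R + deg Q`.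
-/

open Polynomial Filter
open scoped Classical ENNReal

noncomputable section

variable (Fq : Type) [Field Fq] [Fintype Fq]

/-- The element `T` inside the Laurent-series field `𝔽_q((T⁻¹))`, which we realize
as the field of Hahn/Laurent series in the variable `T⁻¹`. -/
def Tel : LaurentSeries Fq := HahnSeries.single (-1 : ℤ) 1

/-- The inverse variable `T⁻¹` itself. -/
def TinvEl : LaurentSeries Fq := HahnSeries.single (1 : ℤ) 1

/-- The embedding of the polynomial ring `𝔽_q[T]` into `𝔽_q((T⁻¹))`,
sending `T` to `Tel`. -/
def polyToL (P : Polynomial Fq) : LaurentSeries Fq :=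
  Polynomial.eval₂ HahnSeries.C (Tel Fq) P

/-- The absolute value `|x| = q ^ (deg x)` on `𝔽_q((T⁻¹))`, with `|0| = 0`.
Here the degree of `x ≠ 0` is minus the order of `x` as a series in `T⁻¹`. -/
def labs (x : LaurentSeries Fq) : ℝ :=
  if x = 0 then 0 else (Fintype.card Fq : ℝ) ^ (-x.order)

/-- `‖x‖`: the distance from `x` to the nearest polynomial. -/
def lnorm (x : LaurentSeries Fq) : ℝ :=
  ⨅ P : Polynomial Fq, labs Fq (x - polyToL Fq P)

/-- `x ∈ 𝔽_q(T)`, i.e. `x` is rational. -/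
def IsRat (x : LaurentSeries Fq) : Prop :=
  ∃ P Q : Polynomial Fq, Q ≠ 0 ∧ polyToL Fq Q * x = polyToL Fq P


/-- Numerators `P_n` of the continued-fraction convergents associated with
partial quotients `C 0 = A₀, C 1 = A₁, …`; indices are shifted by `2`, so that
`cfNum C 0 = P₋₂ = 0`, `cfNum C 1 = P₋₁ = 1`, and `cfNum C (n + 2) = Pₙ`. -/
def cfNum (C : ℕ → Polynomial Fq) : ℕ → Polynomial Fq
  | 0 => 0
  | 1 => 1
  | n + 2 => C n * cfNum C (n + 1) + cfNum C n

/-- Denominators `Q_n` of the continued-fraction convergents, with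
`cfDen C 0 = Q₋₂ = 1`, `cfDen C 1 = Q₋₁ = 0`, and `cfDen C (n + 2) = Qₙ`. -/
def cfDen (C : ℕ → Polynomial Fq) : ℕ → Polynomial Fq
  | 0 => 1
  | 1 => 0
  | n + 2 => C n * cfDen C (n + 1) + cfDen C n

/-- `ξ` has continued-fraction expansion `[C 0; C 1, C 2, …]`, expressed by the
characteristic property `|Qₙ ξ − Pₙ| = |Q_{n+1}|⁻¹` of the convergents. -/
def HasCF (ξ : LaurentSeries Fq) (C : ℕ → Polynomial Fq) : Prop :=
  ∀ n : ℕ, labs Fq (polyToL Fq (cfDen Fq C (n + 2)) * ξ - polyToL Fq (cfNum Fq C (n + 2)))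
    = (labs Fq (polyToL Fq (cfDen Fq C (n + 3))))⁻¹

/-- The convergent matrix `M_k` with rows `(Q_k, −P_k)` and
`((−1)^(k−1) Q_{k−1}, (−1)^k P_{k−1})`. -/
def cfM (C : ℕ → Polynomial Fq) (k : ℕ) : Matrix (Fin 2) (Fin 2) (Polynomial Fq) :=
  !![cfDen Fq C (k + 2), -cfNum Fq C (k + 2);
     (-1 : Polynomial Fq) ^ (k + 1) * cfDen Fq C (k + 1), (-1 : Polynomial Fq) ^ k * cfNum Fq C (k + 1)]

/-- The unipotent matrix `U(a)`. -/
def Umat (a : Polynomial Fq) : Matrix (Fin 2) (Fin 2) (Polynomial Fq) :=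
  !![1, a; 0, 1]

section PolyToL

variable {K : Type} [Field K]

lemma polyToL_add (P P' : K[X]) : polyToL K (P + P') = polyToL K P + polyToL K P' :=
  eval₂_add _ _

lemma polyToL_sub (P P' : K[X]) : polyToL K (P - P') = polyToL K P - polyToL K P' :=
  eval₂_sub _

lemma polyToL_mul (P P' : K[X]) : polyToL K (P * P') = polyToL K P * polyToL K P' :=
  eval₂_mul _ _

lemma polyToL_sum {ι : Type*} (s : Finset ι) (P : ι → K[X]) :
    polyToL K (∑ k ∈ s, P k) = ∑ k ∈ s, polyToL K (P k) :=
  eval₂_finsetSum _ _ _ _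

lemma polyToL_monomial (n : ℕ) (a : K) :
    polyToL K (monomial n a) = HahnSeries.single (-(n : ℤ)) a := by
  rw [polyToL, eval₂_monomial, Tel, HahnSeries.single_pow, HahnSeries.C_apply,
    HahnSeries.single_mul_single]
  simp

lemma coeff_polyToL_of_pos (P : K[X]) {i : ℤ} (hi : 0 < i) : (polyToL K P).coeff i = 0 := by
  induction P using Polynomial.induction_on' with
  | add p q hp hq => rw [polyToL_add, HahnSeries.coeff_add, hp, hq, add_zero]
  | monomial n a => rw [polyToL_monomial, HahnSeries.coeff_single, if_neg (by omega)]

lemma coeff_polyToL_neg_natCast (P : K[X]) (j : ℕ) :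
    (polyToL K P).coeff (-(j : ℤ)) = P.coeff j := by
  induction P using Polynomial.induction_on' with
  | add p q hp hq => rw [polyToL_add, HahnSeries.coeff_add, hp, hq, coeff_add]
  | monomial n a =>
    rw [polyToL_monomial, HahnSeries.coeff_single, coeff_monomial]
    simp only [neg_inj, Nat.cast_inj, eq_comm]

lemma coeff_polyToL_natDegree_ne_zero {P : K[X]} (hP : P ≠ 0) :
    (polyToL K P).coeff (-(P.natDegree : ℤ)) ≠ 0 := by
  rwa [coeff_polyToL_neg_natCast, ← leadingCoeff, leadingCoeff_ne_zero]

lemma polyToL_ne_zero {P : K[X]} (hP : P ≠ 0) : polyToL K P ≠ 0 :=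
  fun h => coeff_polyToL_natDegree_ne_zero hP (by rw [h, HahnSeries.coeff_zero])

lemma order_polyToL {P : K[X]} (hP : P ≠ 0) : (polyToL K P).order = -(P.natDegree : ℤ) := by
  refine le_antisymm (HahnSeries.order_le_of_coeff_ne_zero (coeff_polyToL_natDegree_ne_zero hP))
    (not_lt.mp fun hlt => ?_)
  apply mt HahnSeries.coeff_order_eq_zero.mp (polyToL_ne_zero hP)
  obtain ⟨j, hj⟩ : ∃ j : ℕ, (polyToL K P).order = -(j : ℤ) :=
    ⟨(-(polyToL K P).order).toNat, by omega⟩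
  rw [hj, coeff_polyToL_neg_natCast]
  exact coeff_eq_zero_of_natDegree_lt (by omega)

end PolyToL

section AbsoluteValue

variable {Fq}

lemma one_lt_card_real : (1 : ℝ) < Fintype.card Fq := by
  exact_mod_cast Fintype.one_lt_card

lemma labs_of_ne_zero {x : LaurentSeries Fq} (hx : x ≠ 0) :
    labs Fq x = (Fintype.card Fq : ℝ) ^ (-x.order) :=
  if_neg hx

lemma labs_polyToL {P : Fq[X]} (hP : P ≠ 0) :
    labs Fq (polyToL Fq P) = (Fintype.card Fq : ℝ) ^ (P.natDegree : ℤ) := by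
  rw [labs_of_ne_zero (polyToL_ne_zero hP), order_polyToL hP, neg_neg]

/-- A nonzero coefficient of `T^{-i}`, `i > 0`, survives subtraction of any polynomial. -/
lemma zpow_neg_le_lnorm {x : LaurentSeries Fq} {i : ℤ} (hi : 0 < i) (hx : x.coeff i ≠ 0) :
    (Fintype.card Fq : ℝ) ^ (-i) ≤ lnorm Fq x := by
  refine le_ciInf fun P => ?_
  have hcoeff : (x - polyToL Fq P).coeff i = x.coeff i := by
    rw [HahnSeries.coeff_sub, coeff_polyToL_of_pos P hi, sub_zero]
  have hne : x - polyToL Fq P ≠ 0 := fun h => hx (by rw [← hcoeff, h, HahnSeries.coeff_zero])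
  rw [labs_of_ne_zero hne]
  refine zpow_le_zpow_right₀ one_lt_card_real.le (neg_le_neg ?_)
  exact HahnSeries.order_le_of_coeff_ne_zero (hcoeff ▸ hx)

end AbsoluteValue

section Continuants

open Finset

variable {K : Type} [Field K] {C : ℕ → K[X]}

lemma cfDen_add_two (m : ℕ) : cfDen K C (m + 2) = C m * cfDen K C (m + 1) + cfDen K C m := by
  rw [cfDen]

lemma cfDen_two : cfDen K C 2 = 1 := by
  rw [cfDen_add_two, cfDen, cfDen, mul_zero, zero_add]

lemma degree_cfDen_lt_succ (hdeg : ∀ i, 1 ≤ i → 0 < (C i).natDegree) (m : ℕ) :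
    (cfDen K C (m + 1)).degree < (cfDen K C (m + 2)).degree := by
  induction m with
  | zero =>
    rw [cfDen_two, degree_one]
    exact WithBot.bot_lt_coe 0
  | succ m ih =>
    have hC : C (m + 1) ≠ 0 := ne_zero_of_natDegree_gt (hdeg (m + 1) (by omega))
    have hD : cfDen K C (m + 2) ≠ 0 := ne_zero_of_degree_gt ih
    have hlt : (cfDen K C (m + 2)).degree < (C (m + 1) * cfDen K C (m + 2)).degree := by
      apply degree_lt_degree
      rw [natDegree_mul hC hD]
      have := hdeg (m + 1) (by omega)
      omega
    rwa [cfDen_add_two (m + 1), degree_add_eq_left_of_degree_lt (ih.trans hlt)]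

lemma cfDen_ne_zero (hdeg : ∀ i, 1 ≤ i → 0 < (C i).natDegree) (m : ℕ) :
    cfDen K C (m + 2) ≠ 0 :=
  ne_zero_of_degree_gt (degree_cfDen_lt_succ hdeg m)

lemma natDegree_cfDen_succ (hdeg : ∀ i, 1 ≤ i → 0 < (C i).natDegree) (m : ℕ) :
    (cfDen K C (m + 3)).natDegree = (C (m + 1)).natDegree + (cfDen K C (m + 2)).natDegree := by
  have hC : C (m + 1) ≠ 0 := ne_zero_of_natDegree_gt (hdeg (m + 1) (by omega))
  have hlt : (cfDen K C (m + 1)).degree < (C (m + 1) * cfDen K C (m + 2)).degree := by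
    rw [mul_comm]
    exact (degree_cfDen_lt_succ hdeg m).trans_le (degree_le_mul_left _ hC)
  rw [show m + 3 = m + 1 + 2 from rfl, cfDen_add_two, natDegree_add_eq_left_of_degree_lt hlt,
    natDegree_mul hC (cfDen_ne_zero hdeg m)]

lemma strictMono_natDegree_cfDen (hdeg : ∀ i, 1 ≤ i → 0 < (C i).natDegree) :
    StrictMono fun m => (cfDen K C (m + 2)).natDegree := by
  refine strictMono_nat_of_lt_succ fun m => ?_
  show (cfDen K C (m + 2)).natDegree < (cfDen K C (m + 3)).natDegree
  have := hdeg (m + 1) (by omega)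
  rw [natDegree_cfDen_succ hdeg]
  omega

lemma degree_div_cfDen_lt (hdeg : ∀ i, 1 ≤ i → 0 < (C i).natDegree) {n : ℕ} {Q : K[X]}
    (hQ : Q.degree < (cfDen K C (n + 3)).degree) :
    (Q / cfDen K C (n + 2)).degree < (C (n + 1)).degree := by
  have hD := cfDen_ne_zero hdeg n
  have hC : C (n + 1) ≠ 0 := ne_zero_of_natDegree_gt (hdeg (n + 1) (by omega))
  by_cases hq : Q / cfDen K C (n + 2) = 0
  · rw [hq, degree_zero]
    exact (degree_ne_bot.mpr hC).bot_lt
  have hle : (cfDen K C (n + 2)).degree ≤ Q.degree :=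
    not_lt.mp ((Polynomial.div_eq_zero_iff hD).not.mp hq)
  have hQ0 : Q ≠ 0 := fun h => hq (by rw [h, EuclideanDomain.zero_div])
  have hadd := degree_add_div hD hle
  have hlt := natDegree_lt_natDegree hQ0 hQ
  rw [degree_eq_natDegree hD, degree_eq_natDegree hq, degree_eq_natDegree hQ0] at hadd
  rw [degree_eq_natDegree hq, degree_eq_natDegree hC]
  rw [natDegree_cfDen_succ hdeg] at hlt
  norm_cast at hadd ⊢
  omega

lemma exists_ostrowski (hdeg : ∀ i, 1 ≤ i → 0 < (C i).natDegree) (n : ℕ) {Q : K[X]}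
    (hQ : Q.degree < (cfDen K C (n + 2)).degree) :
    ∃ b : ℕ → K[X], (∀ k, (b k).degree < (C (k + 1)).degree) ∧ (∀ k, n ≤ k → b k = 0) ∧
      Q = ∑ k ∈ range n, b k * cfDen K C (k + 2) := by
  induction n generalizing Q with
  | zero =>
    rw [cfDen_two, degree_one, Nat.WithBot.lt_zero_iff, degree_eq_bot] at hQ
    refine ⟨0, fun k => ?_, fun _ _ => rfl, by simp [hQ]⟩
    rw [Pi.zero_apply, degree_zero]
    exact (degree_ne_bot.mpr (ne_zero_of_natDegree_gt (hdeg (k + 1) (by omega)))).bot_lt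
  | succ n ih =>
    have hD := cfDen_ne_zero hdeg n
    obtain ⟨b, hb, hbn, hsum⟩ := ih (EuclideanDomain.mod_lt Q hD)
    refine ⟨Function.update b n (Q / cfDen K C (n + 2)), fun k => ?_, fun k hk => ?_, ?_⟩
    · rcases eq_or_ne k n with rfl | hk
      · rw [Function.update_self]
        exact degree_div_cfDen_lt hdeg hQ
      · rw [Function.update_of_ne hk]
        exact hb k
    · rw [Function.update_of_ne (by omega)]
      exact hbn k (by omega)
    · have hlow : ∑ k ∈ range n, Function.update b n (Q / cfDen K C (n + 2)) k * cfDen K C (k + 2)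
          = Q % cfDen K C (n + 2) := by
        rw [hsum]
        refine sum_congr rfl fun k hk => ?_
        rw [Function.update_of_ne (by rw [mem_range] at hk; omega)]
      rw [sum_range_succ, hlow, Function.update_self, add_comm, mul_comm]
      exact (EuclideanDomain.div_add_mod Q _).symm

lemma degree_sum_lt_degree_cfDen (hdeg : ∀ i, 1 ≤ i → 0 < (C i).natDegree) {b : ℕ → K[X]}
    (hb : ∀ k, (b k).degree < (C (k + 1)).degree) (n : ℕ) :
    (∑ k ∈ range n, b k * cfDen K C (k + 2)).degree < (cfDen K C (n + 2)).degree := by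
  induction n with
  | zero => simp [cfDen_two]
  | succ n ih =>
    have hD := cfDen_ne_zero hdeg n
    have hterm : (b n * cfDen K C (n + 2)).degree < (cfDen K C (n + 3)).degree := by
      by_cases hbn : b n = 0
      · rw [hbn, zero_mul, degree_zero]
        exact (degree_ne_bot.mpr (cfDen_ne_zero hdeg (n + 1))).bot_lt
      apply degree_lt_degree
      have := natDegree_lt_natDegree hbn (hb n)
      rw [natDegree_mul hbn hD, natDegree_cfDen_succ hdeg]
      omega
    rw [sum_range_succ]
    exact (degree_add_le _ _).trans_lt (max_lt (ih.trans (degree_cfDen_lt_succ hdeg (n + 1))) hterm)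

lemma exists_natDegree_cfDen_le_lt (hdeg : ∀ i, 1 ≤ i → 0 < (C i).natDegree) (Q : K[X]) :
    ∃ n, (cfDen K C (n + 2)).natDegree ≤ Q.natDegree ∧
      Q.natDegree < (cfDen K C (n + 3)).natDegree := by
  have hex : ∃ n, Q.natDegree < (cfDen K C (n + 3)).natDegree :=
    ⟨Q.natDegree, Nat.lt_of_lt_of_le (Nat.lt_succ_self _)
      ((strictMono_natDegree_cfDen hdeg).le_apply (x := Q.natDegree + 1))⟩
  refine ⟨Nat.find hex, ?_, Nat.find_spec hex⟩
  rcases h : Nat.find hex with _ | m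
  · simp [cfDen_two]
  · exact not_lt.mp (Nat.find_min hex (by omega : m < Nat.find hex))

lemma exists_ostrowski_top (hdeg : ∀ i, 1 ≤ i → 0 < (C i).natDegree) (Q : K[X]) :
    ∃ (n : ℕ) (b : ℕ → K[X]), (∀ k, (b k).degree < (C (k + 1)).degree) ∧ b (n + 1) = 0 ∧
      (∀ N, n < N → Q = ∑ k ∈ range N, b k * cfDen K C (k + 2)) ∧
      (b n).natDegree + (cfDen K C (n + 2)).natDegree ≤ Q.natDegree := by
  obtain ⟨n, hle, hlt⟩ := exists_natDegree_cfDen_le_lt hdeg Q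
  obtain ⟨b, hb, hbn, hsum⟩ :=
    exists_ostrowski hdeg (n + 1) (degree_lt_degree hlt : Q.degree < (cfDen K C (n + 3)).degree)
  have hsumN : ∀ N, n < N → Q = ∑ k ∈ range N, b k * cfDen K C (k + 2) := fun N hN => by
    rw [hsum]
    refine sum_subset (range_subset_range.mpr hN) fun k _ hk => ?_
    rw [hbn k (by simpa using hk), zero_mul]
  refine ⟨n, b, hb, hbn _ le_rfl, hsumN, ?_⟩
  by_cases hb0 : b n = 0
  · rwa [hb0, natDegree_zero, zero_add]
  have hlead : b n * cfDen K C (n + 2) = Q - ∑ k ∈ range n, b k * cfDen K C (k + 2) := by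
    rw [hsumN (n + 1) (by omega), sum_range_succ, add_sub_cancel_left]
  rw [← natDegree_mul hb0 (cfDen_ne_zero hdeg n), hlead]
  exact (natDegree_sub_le _ _).trans
    (max_le le_rfl ((natDegree_le_natDegree (degree_sum_lt_degree_cfDen hdeg hb n).le).trans hle))

end Continuants

section Divisibility

variable {K : Type} [Field K]

lemma natDegree_eq_add_natDegree_div {A R : K[X]} (hA : A ≠ 0) (hRA : R ∣ A) :
    A / R ≠ 0 ∧ A.natDegree = R.natDegree + (A / R).natDegree := by
  have hR : R ≠ 0 := fun h => hA (zero_dvd_iff.mp (h ▸ hRA))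
  have hmul : R * (A / R) = A := EuclideanDomain.mul_div_cancel' hR hRA
  have hq : A / R ≠ 0 := fun h => hA (by rw [← hmul, h, mul_zero])
  exact ⟨hq, by rw [← natDegree_mul hR hq, hmul]⟩

lemma degree_sub_div_lt {A R b : K[X]} (hA : A ≠ 0) (hRA : R ∣ A) (hR : 0 < R.natDegree)
    (hb : b.degree < A.degree) : (b - A / R).degree < A.degree := by
  have hq := natDegree_eq_add_natDegree_div hA hRA
  have hlt : (A / R).degree < A.degree := degree_lt_degree (by omega)
  exact (degree_sub_le _ _).trans_lt (max_lt hb hlt)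

end Divisibility

lemma HahnSeries.exists_coeff_eq_coeff_sum_range {M : Type*} [AddCommMonoid M]
    (f : ℕ → HahnSeries ℤ M) (hf : ∀ (m : ℕ) (i : ℤ), i ≤ m → (f m).coeff i = 0) :
    ∃ α : HahnSeries ℤ M, ∀ (N : ℕ) (i : ℤ), i ≤ N →
      α.coeff i = (∑ m ∈ Finset.range N, f m).coeff i := by
  have hsupp : ∀ (m : ℕ) (i : ℤ), (f m).coeff i ≠ 0 → (m : ℤ) < i := fun m i hi =>
    not_le.mp fun h => hi (hf m i h)
  let s : SummableFamily ℤ M ℕ :=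
    { toFun := f
      isPWO_iUnion_support' := by
        refine BddBelow.isWF ⟨0, ?_⟩ |>.isPWO
        rintro i ⟨_, ⟨m, rfl⟩, hi⟩
        have := hsupp m i hi
        omega
      finite_co_support' := fun g => (Set.finite_lt_nat g.toNat).subset fun m hm => by
        have := hsupp m g hm
        show m < g.toNat
        omega }
  refine ⟨s.hsum, fun N i hi => ?_⟩
  rw [SummableFamily.coeff_hsum_eq_sum_of_subset (t := Finset.range N), coeff_sum]
  · rfl
  · intro m hm
    have := hsupp m i hm
    simp only [Finset.coe_range, Set.mem_Iio]
    omega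

section ConvergentErrors

open Finset

variable {K : Type} [Field K] {ξ : LaurentSeries K} {C : ℕ → K[X]}

variable (ξ C) in
def cfError (m : ℕ) : LaurentSeries K :=
  polyToL K (cfDen K C (m + 2)) * ξ - polyToL K (cfNum K C (m + 2))

lemma coeff_polyToL_mul_sub (c : ℕ → K[X]) {α : LaurentSeries K}
    (hα : ∀ (N : ℕ) (i : ℤ), i ≤ N →
      α.coeff i = (∑ m ∈ range N, polyToL K (c m) * cfError ξ C m).coeff i)
    {Q : K[X]} {b : ℕ → K[X]} {N : ℕ} (hQ : Q = ∑ k ∈ range N, b k * cfDen K C (k + 2))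
    {i : ℤ} (hi : 0 < i) (hiN : i ≤ N) :
    (polyToL K Q * ξ - α).coeff i =
      (∑ k ∈ range N, polyToL K (b k - c k) * cfError ξ C k).coeff i := by
  have hterm : ∀ k, polyToL K (b k * cfDen K C (k + 2)) * ξ =
      polyToL K (b k - c k) * cfError ξ C k + polyToL K (b k * cfNum K C (k + 2)) +
        polyToL K (c k) * cfError ξ C k := fun k => by
    rw [polyToL_mul, polyToL_mul, polyToL_sub, cfError]
    ring
  have hsplit : polyToL K Q * ξ - α =
      ∑ k ∈ range N, polyToL K (b k - c k) * cfError ξ C k +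
        polyToL K (∑ k ∈ range N, b k * cfNum K C (k + 2)) +
        ((∑ k ∈ range N, polyToL K (c k) * cfError ξ C k) - α) := by
    rw [hQ, polyToL_sum, polyToL_sum, sum_mul, sum_congr rfl fun k _ => hterm k,
      sum_add_distrib, sum_add_distrib]
    ring
  rw [hsplit, HahnSeries.coeff_add, HahnSeries.coeff_add, HahnSeries.coeff_sub,
    coeff_polyToL_of_pos _ hi, hα N i hiN, sub_self, add_zero, add_zero]

end ConvergentErrors

section Approximation

open Finset

variable {Fq} {ξ : LaurentSeries Fq} {C : ℕ → Fq[X]}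

lemma cfError_ne_zero_and_order (hdeg : ∀ i, 1 ≤ i → 0 < (C i).natDegree) (hcf : HasCF Fq ξ C)
    (m : ℕ) : cfError ξ C m ≠ 0 ∧ (cfError ξ C m).order = (cfDen Fq C (m + 3)).natDegree := by
  have hq : (1 : ℝ) < Fintype.card Fq := one_lt_card_real
  have h : labs Fq (cfError ξ C m) =
      (Fintype.card Fq : ℝ) ^ (-((cfDen Fq C (m + 3)).natDegree : ℤ)) := by
    rw [cfError, hcf m, labs_polyToL (cfDen_ne_zero hdeg (m + 1)), zpow_neg]
  have hne : cfError ξ C m ≠ 0 := fun h0 => by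
    rw [h0, labs, if_pos rfl] at h
    exact (zpow_pos (zero_lt_one.trans hq) _).ne h
  rw [labs_of_ne_zero hne] at h
  exact ⟨hne, neg_inj.mp (zpow_right_injective₀ (zero_lt_one.trans hq) hq.ne' h)⟩

lemma order_polyToL_mul_cfError (hdeg : ∀ i, 1 ≤ i → 0 < (C i).natDegree) (hcf : HasCF Fq ξ C)
    {d : Fq[X]} (hd : d ≠ 0) (m : ℕ) :
    (polyToL Fq d * cfError ξ C m).order = (cfDen Fq C (m + 3)).natDegree - (d.natDegree : ℤ) := by
  obtain ⟨hθ, hord⟩ := cfError_ne_zero_and_order hdeg hcf m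
  rw [HahnSeries.order_mul (polyToL_ne_zero hd) hθ, order_polyToL hd, hord]
  ring

lemma coeff_polyToL_mul_cfError_of_le (hdeg : ∀ i, 1 ≤ i → 0 < (C i).natDegree)
    (hcf : HasCF Fq ξ C) {R : Fq[X]} (hRdeg : 0 < R.natDegree) (hdvd : ∀ i, 1 ≤ i → R ∣ C i)
    (m : ℕ) {i : ℤ} (hi : i ≤ m) : (polyToL Fq (C (m + 1) / R) * cfError ξ C m).coeff i = 0 := by
  have hC : C (m + 1) ≠ 0 := ne_zero_of_natDegree_gt (hdeg (m + 1) (by omega))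
  obtain ⟨hc, hcdeg⟩ := natDegree_eq_add_natDegree_div hC (hdvd (m + 1) (by omega))
  apply HahnSeries.coeff_eq_zero_of_lt_order
  rw [order_polyToL_mul_cfError hdeg hcf hc, natDegree_cfDen_succ hdeg]
  have := (strictMono_natDegree_cfDen hdeg).le_apply (x := m)
  omega

lemma natDegree_cfDen_lt_order_le (hdeg : ∀ i, 1 ≤ i → 0 < (C i).natDegree)
    (hcf : HasCF Fq ξ C) {d : Fq[X]} {m : ℕ} (hd : d ≠ 0)
    (hdC : d.degree < (C (m + 1)).degree) :
    ((cfDen Fq C (m + 2)).natDegree : ℤ) < (polyToL Fq d * cfError ξ C m).order ∧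
      (polyToL Fq d * cfError ξ C m).order ≤ (cfDen Fq C (m + 3)).natDegree := by
  have := natDegree_lt_natDegree hd hdC
  have := natDegree_cfDen_succ hdeg m
  rw [order_polyToL_mul_cfError hdeg hcf hd]
  omega

/-- The first nonzero term of `∑ dₖ θₖ` has strictly the smallest order, so its leading
coefficient is a coefficient of the sum. -/
lemma exists_coeff_sum_ne_zero (hdeg : ∀ i, 1 ≤ i → 0 < (C i).natDegree) (hcf : HasCF Fq ξ C)
    {d : ℕ → Fq[X]} (hd : ∀ k, (d k).degree < (C (k + 1)).degree) {w N : ℕ} (hw : d w ≠ 0)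
    (hwN : w < N) :
    ∃ i : ℤ, 0 < i ∧ i ≤ (polyToL Fq (d w) * cfError ξ C w).order ∧
      (∑ k ∈ range N, polyToL Fq (d k) * cfError ξ C k).coeff i ≠ 0 := by
  have hex : ∃ k, d k ≠ 0 := ⟨w, hw⟩
  set j := Nat.find hex
  have hj : d j ≠ 0 := Nat.find_spec hex
  have hjw : j ≤ w := Nat.find_min' hex hw
  have hbounds := fun k (hk : d k ≠ 0) => natDegree_cfDen_lt_order_le hdeg hcf hk (hd k)
  have hlater : ∀ k, j < k → d k ≠ 0 →
      (polyToL Fq (d j) * cfError ξ C j).order < (polyToL Fq (d k) * cfError ξ C k).order := by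
    intro k hjk hk
    have : (cfDen Fq C (j + 3)).natDegree ≤ (cfDen Fq C (k + 2)).natDegree :=
      (strictMono_natDegree_cfDen hdeg).monotone (show j + 1 ≤ k by omega)
    have := (hbounds j hj).2
    have := (hbounds k hk).1
    omega
  refine ⟨(polyToL Fq (d j) * cfError ξ C j).order, by have := (hbounds j hj).1; omega, ?_, ?_⟩
  · rcases hjw.lt_or_eq with h | h
    · exact (hlater w h hw).le
    · rw [h]
  rw [HahnSeries.coeff_sum, sum_eq_single_of_mem j (mem_range.mpr (hjw.trans_lt hwN))]
  · exact mt HahnSeries.coeff_order_eq_zero.mp (mul_ne_zero (polyToL_ne_zero hj)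
      (cfError_ne_zero_and_order hdeg hcf j).1)
  · intro k _ hkj
    by_cases hk : d k = 0
    · rw [hk, polyToL, eval₂_zero, zero_mul, HahnSeries.coeff_zero]
    · exact HahnSeries.coeff_eq_zero_of_lt_order
        (hlater k ((Nat.find_min' hex hk).lt_of_ne (Ne.symm hkj)) hk)

/-- If the digit of `Q` at its top index `n` differs from `Aₙ₊₁ / R`, the term at `n` is
small enough; otherwise the digit `0 - Aₙ₊₂ / R` at `n + 1` is. -/
lemma exists_digit_sub_ne_zero_order_le (hdeg : ∀ i, 1 ≤ i → 0 < (C i).natDegree)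
    (hcf : HasCF Fq ξ C) {R : Fq[X]} (hdvd : ∀ i, 1 ≤ i → R ∣ C i) {Q : Fq[X]}
    {b : ℕ → Fq[X]} {n : ℕ} (hbn : b (n + 1) = 0)
    (hQ : (b n).natDegree + (cfDen Fq C (n + 2)).natDegree ≤ Q.natDegree) :
    ∃ w ≤ n + 1, b w - C (w + 1) / R ≠ 0 ∧
      (polyToL Fq (b w - C (w + 1) / R) * cfError ξ C w).order ≤
        2 * (R.natDegree : ℤ) + Q.natDegree := by
  have hc : ∀ k, C (k + 1) / R ≠ 0 ∧
      (C (k + 1)).natDegree = R.natDegree + (C (k + 1) / R).natDegree :=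
    fun k => natDegree_eq_add_natDegree_div (ne_zero_of_natDegree_gt (hdeg (k + 1) (by omega)))
      (hdvd (k + 1) (by omega))
  have hDn := natDegree_cfDen_succ hdeg n
  by_cases hdn : b n - C (n + 1) / R = 0
  · have hd : b (n + 1) - C (n + 1 + 1) / R = -(C (n + 1 + 1) / R) := by rw [hbn, zero_sub]
    have hd0 : -(C (n + 1 + 1) / R) ≠ 0 := neg_ne_zero.mpr (hc (n + 1)).1
    refine ⟨n + 1, le_rfl, hd ▸ hd0, ?_⟩
    rw [hd, order_polyToL_mul_cfError hdeg hcf hd0, natDegree_neg, natDegree_cfDen_succ hdeg,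
      show n + 1 + 2 = n + 3 from rfl]
    rw [sub_eq_zero.mp hdn] at hQ
    have := (hc n).2
    have := (hc (n + 1)).2
    omega
  · refine ⟨n, by omega, hdn, ?_⟩
    rw [order_polyToL_mul_cfError hdeg hcf hdn]
    have hsub : (b n).natDegree < (C (n + 1) / R).natDegree →
        (b n - C (n + 1) / R).natDegree = (C (n + 1) / R).natDegree :=
      natDegree_sub_eq_right_of_natDegree_lt
    have := (hc n).2
    omega

lemma exists_coeff_polyToL_mul_sub_ne_zero (hdeg : ∀ i, 1 ≤ i → 0 < (C i).natDegree)
    (hcf : HasCF Fq ξ C) {R : Fq[X]} (hRdeg : 0 < R.natDegree) (hdvd : ∀ i, 1 ≤ i → R ∣ C i)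
    {α : LaurentSeries Fq}
    (hα : ∀ (N : ℕ) (i : ℤ), i ≤ N →
      α.coeff i = (∑ m ∈ range N, polyToL Fq (C (m + 1) / R) * cfError ξ C m).coeff i)
    (Q : Fq[X]) :
    ∃ i : ℤ, 0 < i ∧ i ≤ 2 * (R.natDegree : ℤ) + Q.natDegree ∧
      (polyToL Fq Q * ξ - α).coeff i ≠ 0 := by
  obtain ⟨n, b, hb, hbn, hQ, hQdeg⟩ := exists_ostrowski_top hdeg Q
  obtain ⟨w, hwn, hw, hwQ⟩ := exists_digit_sub_ne_zero_order_le (ξ := ξ) hdeg hcf hdvd hbn hQdeg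
  set N := n + 2 + 2 * R.natDegree + Q.natDegree
  have hd : ∀ k, (b k - C (k + 1) / R).degree < (C (k + 1)).degree := fun k =>
    degree_sub_div_lt (ne_zero_of_natDegree_gt (hdeg (k + 1) (by omega)))
      (hdvd (k + 1) (by omega)) hRdeg (hb k)
  obtain ⟨i, hi, hiw, hcoeff⟩ := exists_coeff_sum_ne_zero hdeg hcf hd hw (by omega : w < N)
  refine ⟨i, hi, hiw.trans hwQ, ?_⟩
  rwa [coeff_polyToL_mul_sub _ hα (hQ N (by omega)) hi (by omega)]

end Approximation

theorem stmt10 (ξ : LaurentSeries Fq) (C : ℕ → Polynomial Fq) (R : Polynomial Fq)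
    (hdeg : ∀ i, 1 ≤ i → 0 < (C i).natDegree)
    (hcf : HasCF Fq ξ C)
    (hRdeg : 0 < R.natDegree)
    (hdvd : ∀ i, 1 ≤ i → R ∣ C i) :
    ∃ α : LaurentSeries Fq, ∀ Q : Polynomial Fq, Q ≠ 0 →
      1 / (labs Fq (polyToL Fq R) ^ 2 * labs Fq (polyToL Fq Q)) ≤
        lnorm Fq (polyToL Fq Q * ξ - α) := by
  obtain ⟨α, hα⟩ := HahnSeries.exists_coeff_eq_coeff_sum_range
    (fun m => polyToL Fq (C (m + 1) / R) * cfError ξ C m)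
    (fun m _ hi => coeff_polyToL_mul_cfError_of_le hdeg hcf hRdeg hdvd m hi)
  refine ⟨α, fun Q hQ => ?_⟩
  obtain ⟨i, hi, hiQ, hcoeff⟩ := exists_coeff_polyToL_mul_sub_ne_zero hdeg hcf hRdeg hdvd hα Q
  have hq : (1 : ℝ) < Fintype.card Fq := one_lt_card_real
  calc 1 / (labs Fq (polyToL Fq R) ^ 2 * labs Fq (polyToL Fq Q))
      = (Fintype.card Fq : ℝ) ^ (-(2 * (R.natDegree : ℤ) + Q.natDegree)) := by
        rw [labs_polyToL (ne_zero_of_natDegree_gt hRdeg), labs_polyToL hQ, ← zpow_natCast,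
          ← zpow_mul, ← zpow_add₀ (zero_lt_one.trans hq).ne', one_div, ← zpow_neg]
        push_cast
        ring_nf
    _ ≤ (Fintype.card Fq : ℝ) ^ (-i) := zpow_le_zpow_right₀ hq.le (by omega)
    _ ≤ lnorm Fq (polyToL Fq Q * ξ - α) := zpow_neg_le_lnorm hi hcoeff
end
end

section
/- Let ξ ∈ 𝔽_q((T^{-1})) be irrational with |ξ| ≤ 1 and convergents P_n/Q_n and convergent matrices M_k. Let N ∈ SL₂(𝔽_q[T]) have rows (t, t') and (s, s'), let a ∈ 𝔽_q[T], and write γ = N·U(a)·M_k with entries V₁, U₁ (top row) and V₂, U₂ (bottom row). For y ∈ 𝔽_q((T^{-1})), setting δ = s·y − t and δ' = s'·y − t', one has |V₁ξ + U₁ − y(V₂ξ + U₂)| ≤ max{ |δ|/|Q_{k+1}|, |δa + δ'|/|Q_k| }. -/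
open Polynomial Filter
open scoped Classical ENNReal

noncomputable section

variable (Fq : Type) [Field Fq] [Fintype Fq]

/-- `SL₂(𝔽_q[T])`. -/
abbrev SL2 := Matrix.SpecialLinearGroup (Fin 2) (Polynomial Fq)

/-- Maximum of the absolute values of the entries of a `2 × 2` matrix. -/
def matAbs (M : Matrix (Fin 2) (Fin 2) (LaurentSeries Fq)) : ℝ :=
  max (max (labs Fq (M 0 0)) (labs Fq (M 0 1))) (max (labs Fq (M 1 0)) (labs Fq (M 1 1)))

/-- The size `|γ|` of a matrix `γ ∈ SL₂(𝔽_q[T])`. -/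
def gabs (γ : SL2 Fq) : ℝ :=
  matAbs Fq (((γ : Matrix (Fin 2) (Fin 2) (Polynomial Fq))).map (polyToL Fq))

/-- Maximum of the absolute values of the coordinates of a vector. -/
def vabs (v : Fin 2 → LaurentSeries Fq) : ℝ :=
  max (labs Fq (v 0)) (labs Fq (v 1))

/-- The standard linear action of `SL₂(𝔽_q[T])` on `𝔽_q((T⁻¹))²`. -/
def act (γ : SL2 Fq) (v : Fin 2 → LaurentSeries Fq) : Fin 2 → LaurentSeries Fq :=
  (((γ : Matrix (Fin 2) (Fin 2) (Polynomial Fq))).map (polyToL Fq)).mulVec v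

/-- The asymptotic Diophantine exponent `μ(x, y)` (as an element of `ℝ≥0∞`). -/
def muExp (x y : Fin 2 → LaurentSeries Fq) : ℝ≥0∞ :=
  ⨆ m ∈ {m : ℝ |
      {γ : SL2 Fq | vabs Fq (act Fq γ x - y) ≤ gabs Fq γ ^ (-m)}.Infinite},
    ENNReal.ofReal m

/-- The uniform Diophantine exponent `μ̂(x, y)` (as an element of `ℝ≥0∞`). -/
def muHatExp (x y : Fin 2 → LaurentSeries Fq) : ℝ≥0∞ :=
  ⨆ m ∈ {m : ℝ | ∀ᶠ H : ℝ in atTop, ∃ γ : SL2 Fq,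
      gabs Fq γ ≤ H ∧ vabs Fq (act Fq γ x - y) ≤ H ^ (-m)},
    ENNReal.ofReal m

/-- The irrationality exponent `ω(ξ)` (as an element of `ℝ≥0∞`). -/
def omegaExp (ξ : LaurentSeries Fq) : ℝ≥0∞ :=
  ⨆ w ∈ {w : ℝ |
      {Q : Polynomial Fq | Q ≠ 0 ∧
        lnorm Fq (polyToL Fq Q * ξ) ≤ labs Fq (polyToL Fq Q) ^ (-w)}.Infinite},
    ENNReal.ofReal w

/-! The convergent matrix `M_k` sends `(ξ, 1)` to `(e_k, -(-1)^k e_{k-1})`, where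
`e_n = Q_n ξ - P_n`, and the row `(1, -y) N` is `-(δ, δ')`. Hence the error form of
`N U(a) M_k` equals `-δ e_k + (-1)^k (δ a + δ') e_{k-1}`, and the ultrametric inequality
together with `|e_n| = |Q_{n+1}|⁻¹` gives the bound. -/

omit [Fintype Fq] in
lemma polyToL_eq_eval₂RingHom : polyToL Fq = eval₂RingHom HahnSeries.C (Tel Fq) := rfl

lemma labs_nonneg (x : LaurentSeries Fq) : 0 ≤ labs Fq x := by
  unfold labs
  split_ifs <;> positivity

lemma labs_zero : labs Fq 0 = 0 := by
  simp [labs]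

lemma labs_one : labs Fq 1 = 1 := by
  simp [labs]

lemma labs_neg (x : LaurentSeries Fq) : labs Fq (-x) = labs Fq x := by
  simp only [labs, neg_eq_zero, HahnSeries.order_neg]

lemma labs_mul (x y : LaurentSeries Fq) : labs Fq (x * y) = labs Fq x * labs Fq y := by
  by_cases hx : x = 0
  · simp [labs, hx]
  by_cases hy : y = 0
  · simp [labs, hy]
  have hq : (Fintype.card Fq : ℝ) ≠ 0 := by positivity
  simp only [labs, if_neg (mul_ne_zero hx hy), if_neg hx, if_neg hy, HahnSeries.order_mul hx hy,
    neg_add, zpow_add₀ hq]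

lemma labs_neg_one_pow (k : ℕ) : labs Fq ((-1 : LaurentSeries Fq) ^ k) = 1 := by
  induction k with
  | zero => exact labs_one Fq
  | succ k ih => rw [pow_succ, labs_mul, ih, labs_neg, labs_one, one_mul]

lemma labs_add_le_max (x y : LaurentSeries Fq) :
    labs Fq (x + y) ≤ max (labs Fq x) (labs Fq y) := by
  by_cases hx : x = 0
  · simp [hx]
  by_cases hy : y = 0
  · simp [hy]
  by_cases hxy : x + y = 0
  · rw [hxy, labs_zero]
    exact le_max_of_le_left (labs_nonneg Fq x)
  have hq : (1 : ℝ) ≤ Fintype.card Fq := by exact_mod_cast Fintype.card_pos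
  simp only [labs, if_neg hx, if_neg hy, if_neg hxy]
  rcases min_le_iff.mp (HahnSeries.min_order_le_order_add hxy) with h | h
  · exact le_max_of_le_left (zpow_le_zpow_right₀ hq (neg_le_neg h))
  · exact le_max_of_le_right (zpow_le_zpow_right₀ hq (neg_le_neg h))

section convergents

variable (ξ : LaurentSeries Fq) (C : ℕ → Polynomial Fq)

/-- `cfErr ξ C (n + 2) = Qₙ ξ - Pₙ`, with the index shift of `cfNum` and `cfDen`. -/
def cfErr (n : ℕ) : LaurentSeries Fq :=
  polyToL Fq (cfDen Fq C n) * ξ - polyToL Fq (cfNum Fq C n)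

variable {ξ C}

lemma HasCF.labs_cfErr (hcf : HasCF Fq ξ C) (n : ℕ) :
    labs Fq (cfErr Fq ξ C (n + 1)) = (labs Fq (polyToL Fq (cfDen Fq C (n + 2))))⁻¹ := by
  cases n with
  | zero => simp [cfErr, cfNum, cfDen, polyToL_eq_eval₂RingHom, labs_neg, labs_one]
  | succ m => exact hcf m

variable (ξ C)

omit [Fintype Fq] in
lemma errorForm_mul_Umat_cfM (k : ℕ) (N : Matrix (Fin 2) (Fin 2) (Polynomial Fq))
    (a : Polynomial Fq) (y : LaurentSeries Fq) :
    polyToL Fq ((N * Umat Fq a * cfM Fq C k) 0 0) * ξ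
        + polyToL Fq ((N * Umat Fq a * cfM Fq C k) 0 1)
        - y * (polyToL Fq ((N * Umat Fq a * cfM Fq C k) 1 0) * ξ
          + polyToL Fq ((N * Umat Fq a * cfM Fq C k) 1 1))
      = -((polyToL Fq (N 1 0) * y - polyToL Fq (N 0 0)) * cfErr Fq ξ C (k + 2))
        + (-1) ^ k * (((polyToL Fq (N 1 0) * y - polyToL Fq (N 0 0)) * polyToL Fq a
            + (polyToL Fq (N 1 1) * y - polyToL Fq (N 0 1))) * cfErr Fq ξ C (k + 1)) := by
  simp only [cfErr, Matrix.mul_apply, Fin.sum_univ_two, Umat, cfM, Matrix.of_apply,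
    Matrix.cons_val', Matrix.cons_val_zero, Matrix.cons_val_one, Matrix.cons_val_fin_one,
    polyToL_eq_eval₂RingHom, map_add, map_mul, map_neg, map_pow, map_one, map_zero]
  ring

end convergents

theorem stmt16 (ξ : LaurentSeries Fq)
    (C : ℕ → Polynomial Fq)
    (hcf : HasCF Fq ξ C) (k : ℕ)
    (N : Matrix (Fin 2) (Fin 2) (Polynomial Fq))
    (a : Polynomial Fq) (y : LaurentSeries Fq) :
    labs Fq (polyToL Fq ((N * Umat Fq a * cfM Fq C k) 0 0) * ξ
        + polyToL Fq ((N * Umat Fq a * cfM Fq C k) 0 1)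
        - y * (polyToL Fq ((N * Umat Fq a * cfM Fq C k) 1 0) * ξ
          + polyToL Fq ((N * Umat Fq a * cfM Fq C k) 1 1)))
      ≤ max
        (labs Fq (polyToL Fq (N 1 0) * y - polyToL Fq (N 0 0)) /
          labs Fq (polyToL Fq (cfDen Fq C (k + 3))))
        (labs Fq ((polyToL Fq (N 1 0) * y - polyToL Fq (N 0 0)) * polyToL Fq a
            + (polyToL Fq (N 1 1) * y - polyToL Fq (N 0 1))) /
          labs Fq (polyToL Fq (cfDen Fq C (k + 2)))) := by
  rw [errorForm_mul_Umat_cfM]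
  refine (labs_add_le_max Fq _ _).trans_eq ?_
  simp only [labs_neg, labs_mul, labs_neg_one_pow, one_mul, hcf.labs_cfErr, div_eq_mul_inv]

end
end
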